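/- arXiv:math/0506055 — 6 statements merged into one kernel-verified Lean document; each statement's English description precedes it below -/
import Mathlib

section
/- Let L be a simple Lie algebra over an arbitrary field, graded by a (possibly non-abelian) group G, i.e. L = ⊕_{g∈G} L_g with [L_g, L_h] ⊆ L_{gh}. Then the support {g ∈ G : L_g ≠ 0} generates an abelian subgroup of G. -/
/-!
Fix `g` in the support and split `L = I + D`, where `I` is the sum of the components `L_k` with
`k` commuting with `g` and `D` the sum of the others. Components of non-commuting degrees `a, b`
bracket to zero, as `⁅L_a, L_b⁆ ⊆ L_{ab} ∩ L_{ba} = 0`; hence `L_g` centralizes `D`. Since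
`⁅I, D⁆ ⊆ D`, the Jacobi identity makes the centralizer of `D` an ideal. It contains `L_g ≠ 0`,
so by simplicity it is all of `L`: `D` is central, hence zero. So the support consists of pairwise
commuting elements, and the subgroup they generate is abelian.
-/

namespace LieAlgebra

variable {R L : Type*} [CommRing R] [LieRing L] [LieAlgebra R L]

def centralizerIdeal (I D : Submodule R L) (hsup : I ⊔ D = ⊤)
    (hID : ∀ a ∈ I, ∀ d ∈ D, ⁅a, d⁆ ∈ D) : LieIdeal R L where
  carrier := {x | ∀ d ∈ D, ⁅x, d⁆ = 0}
  add_mem' hx hy d hd := by rw [add_lie, hx d hd, hy d hd, add_zero]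
  zero_mem' d _ := zero_lie d
  smul_mem' c x hx d hd := by rw [smul_lie, hx d hd, smul_zero]
  lie_mem {z x} hx d hd := by
    obtain ⟨a, ha, b, hb, rfl⟩ := Submodule.mem_sup.mp (hsup ▸ Submodule.mem_top (x := z))
    rw [add_lie, ← lie_skew b x, hx b hb, neg_zero, add_zero, lie_lie, hx d hd, lie_zero,
      hx _ (hID a ha d hd), sub_zero]

theorem IsSimple.eq_bot_of_centralized_by_ne_zero [IsSimple R L] {I D : Submodule R L}
    (hsup : I ⊔ D = ⊤) (hID : ∀ a ∈ I, ∀ d ∈ D, ⁅a, d⁆ ∈ D) {x : L} (hx : x ≠ 0)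
    (hxD : ∀ d ∈ D, ⁅x, d⁆ = 0) : D = ⊥ := by
  have htop : centralizerIdeal I D hsup hID = ⊤ := by
    refine (IsSimple.eq_bot_or_eq_top _).resolve_left fun hbot => hx ?_
    have hxC : x ∈ centralizerIdeal I D hsup hID := hxD
    rwa [hbot, LieSubmodule.mem_bot] at hxC
  have hD_center : D ≤ (center R L).toSubmodule := fun d hd =>
    (LieModule.mem_maxTrivSubmodule R L L d).mpr fun y =>
      (htop ▸ LieSubmodule.mem_top y : y ∈ centralizerIdeal I D hsup hID) d hd
  simpa [center_eq_bot] using hD_center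

end LieAlgebra

section Grading

open LieAlgebra

variable {R L G : Type*} [CommRing R] [LieRing L] [LieAlgebra R L] [Group G]
  {Lg : G → Submodule R L}

theorem lie_eq_zero_of_mul_ne_mul (hind : iSupIndep Lg)
    (hbr : ∀ g h : G, ∀ x ∈ Lg g, ∀ y ∈ Lg h, ⁅x, y⁆ ∈ Lg (g * h)) {a b : G}
    (hab : a * b ≠ b * a) {x y : L} (hx : x ∈ Lg a) (hy : y ∈ Lg b) : ⁅x, y⁆ = 0 :=
  Submodule.disjoint_def.mp (hind.pairwiseDisjoint hab) _ (hbr a b x hx y hy)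
    (by rw [← lie_skew]; exact neg_mem (hbr b a y hy x hx))

theorem lie_mem_iSup_notMem_of_mem_iSup_mem
    (hbr : ∀ g h : G, ∀ x ∈ Lg g, ∀ y ∈ Lg h, ⁅x, y⁆ ∈ Lg (g * h)) {H : Subgroup G} {a d : L}
    (ha : a ∈ ⨆ k ∈ H, Lg k) (hd : d ∈ ⨆ m ∉ H, Lg m) : ⁅a, d⁆ ∈ ⨆ m ∉ H, Lg m := by
  set D := ⨆ m ∉ H, Lg m
  suffices (⨆ k ∈ H, Lg k) ≤
      (Submodule.compatibleMaps D D).comap (ad R L : L →ₗ[R] Module.End R L) from this ha hd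
  refine iSup₂_le fun k hk x hx => (show D ≤ D.comap (ad R L x) from ?_)
  refine iSup₂_le fun m hm y hy => ?_
  exact le_iSup₂ (f := fun m (_ : m ∉ H) => Lg m) (k * m)
    ((H.mul_mem_cancel_left hk).not.mpr hm) (hbr k m x hx y hy)

theorem mul_comm_of_ne_bot [IsSimple R L] (hind : iSupIndep Lg) (htop : ⨆ g, Lg g = ⊤)
    (hbr : ∀ g h : G, ∀ x ∈ Lg g, ∀ y ∈ Lg h, ⁅x, y⁆ ∈ Lg (g * h)) {g h : G}
    (hg : Lg g ≠ ⊥) (hh : Lg h ≠ ⊥) : g * h = h * g := by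
  set H := Subgroup.centralizer {g}
  have hsup : (⨆ k ∈ H, Lg k) ⊔ (⨆ m ∉ H, Lg m) = ⊤ := by rw [← iSup_split, htop]
  obtain ⟨x, hx, hx0⟩ := Submodule.exists_mem_ne_zero_of_ne_bot hg
  have hxD : (⨆ m ∉ H, Lg m) ≤ LinearMap.ker (ad R L x) :=
    iSup₂_le fun m hm y hy => lie_eq_zero_of_mul_ne_mul hind hbr
      (fun e => hm (Subgroup.mem_centralizer_singleton_iff.mpr e.symm)) hx hy
  have hD : (⨆ m ∉ H, Lg m) = ⊥ :=
    IsSimple.eq_bot_of_centralized_by_ne_zero hsup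
      (fun a ha d hd => lie_mem_iSup_notMem_of_mem_iSup_mem hbr ha hd) hx0 hxD
  by_contra hgh
  refine hh (eq_bot_iff.mpr (hD ▸ le_iSup₂ (f := fun m (_ : m ∉ H) => Lg m) h ?_))
  exact fun hmem => hgh (Subgroup.mem_centralizer_singleton_iff.mp hmem).symm

end Grading

/-- If a simple Lie algebra `L` over an arbitrary field is graded by a
(possibly non-abelian) group `G`, then the support of the grading generates an abelian
subgroup of `G`. -/
theorem support_of_grading_generates_abelian_subgroup
    {F : Type*} [Field F] {L : Type*} [LieRing L] [LieAlgebra F L]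
    [LieAlgebra.IsSimple F L] {G : Type*} [Group G] [DecidableEq G]
    (Lg : G → Submodule F L)
    (hdec : DirectSum.IsInternal Lg)
    (hbr : ∀ g h : G, ∀ x ∈ Lg g, ∀ y ∈ Lg h, ⁅x, y⁆ ∈ Lg (g * h)) :
    ∀ a ∈ Subgroup.closure {g : G | Lg g ≠ ⊥},
      ∀ b ∈ Subgroup.closure {g : G | Lg g ≠ ⊥}, a * b = b * a := by
  have := Subgroup.isMulCommutative_closure (k := {g : G | Lg g ≠ ⊥}) fun g hg h hh =>
    mul_comm_of_ne_bot hdec.submodule_iSupIndep hdec.submodule_iSup_eq_top hbr hg hh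
  exact fun a ha b hb => setLike_mul_comm ha hb
end

section
/- Let L be a simple Lie algebra graded by a group G. If g, h ∈ G satisfy [L_g, L_h] ≠ 0, then gh = hg. -/
/-!
By antisymmetry `⁅x, y⁆ = -⁅y, x⁆`, the bracket of `x ∈ L_g` and `y ∈ L_h` lies in both `L_{gh}` and
`L_{hg}`; distinct components of a direct sum meet only in `0`.
-/

theorem iSupIndep.eq_of_ne_zero_of_mem_of_mem {R M ι : Type*} [Semiring R] [AddCommMonoid M]
    [Module R M] {p : ι → Submodule R M} (hp : iSupIndep p) {i j : ι} {x : M} (hx : x ≠ 0)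
    (hi : x ∈ p i) (hj : x ∈ p j) : i = j := by
  by_contra hij
  exact hx (Submodule.disjoint_def.mp (hp.pairwiseDisjoint hij) x hi hj)

theorem lie_mem_of_mem_swap {R L G : Type*} [CommRing R] [LieRing L] [LieAlgebra R L] [Mul G]
    {Lg : G → Submodule R L} (hbr : ∀ g h : G, ∀ x ∈ Lg g, ∀ y ∈ Lg h, ⁅x, y⁆ ∈ Lg (g * h))
    {g h : G} {x y : L} (hx : x ∈ Lg g) (hy : y ∈ Lg h) : ⁅x, y⁆ ∈ Lg (h * g) := by
  simpa only [lie_skew] using neg_mem (hbr h g y hy x hx)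

theorem commute_of_bracket_ne_zero_general
    {F : Type*} [Field F] {L : Type*} [LieRing L] [LieAlgebra F L]
    {G : Type*} [Group G] [DecidableEq G]
    (Lg : G → Submodule F L)
    (hdec : DirectSum.IsInternal Lg)
    (hbr : ∀ g h : G, ∀ x ∈ Lg g, ∀ y ∈ Lg h, ⁅x, y⁆ ∈ Lg (g * h)) :
    ∀ g h : G, (∃ x ∈ Lg g, ∃ y ∈ Lg h, ⁅x, y⁆ ≠ 0) → g * h = h * g := by
  rintro g h ⟨x, hx, y, hy, hne⟩
  exact hdec.submodule_iSupIndep.eq_of_ne_zero_of_mem_of_mem hne (hbr g h x hx y hy)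
    (lie_mem_of_mem_swap hbr hx hy)

/-- If a simple Lie algebra `L` is graded by a group `G` and
`[L_g, L_h] ≠ 0`, then `g` and `h` commute. -/
theorem commute_of_bracket_ne_zero
    {F : Type*} [Field F] {L : Type*} [LieRing L] [LieAlgebra F L]
    [LieAlgebra.IsSimple F L] {G : Type*} [Group G] [DecidableEq G]
    (Lg : G → Submodule F L)
    (hdec : DirectSum.IsInternal Lg)
    (hbr : ∀ g h : G, ∀ x ∈ Lg g, ∀ y ∈ Lg h, ⁅x, y⁆ ∈ Lg (g * h)) :
    ∀ g h : G, (∃ x ∈ Lg g, ∃ y ∈ Lg h, ⁅x, y⁆ ≠ 0) → g * h = h * g :=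
  commute_of_bracket_ne_zero_general Lg hdec hbr
end

section
/- Let n > 2 and F an algebraically closed field of characteristic 0. The Z₂-grading of sl(n) given by L_0 = skew-symmetric matrices (under transpose) and L_1 = symmetric matrices of trace zero is not induced by any Z₂-grading of the associative algebra M_n(F): there are no nonnegative integers k, l with k + l = n such that dim L_0 = k² + l² − 1 and dim L_1 = 2kl. Equivalently, the equations k² + l² − 1 = n(n−1)/2 and 2kl = n(n+1)/2 − 1 with k + l = n force n ≤ 2. -/
/-- For `n > 2` the `Z₂`-grading of `sl(n)` into skew-symmetric matrices
(`dim = n(n-1)/2`) and symmetric traceless matrices (`dim = n(n+1)/2 - 1`) is not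
induced by an (elementary) `Z₂`-grading of `M_n(F)`: there are no `k, l ≥ 0` with
`k + l = n`, `k² + l² - 1 = n(n-1)/2` and `2kl = n(n+1)/2 - 1`. -/
theorem no_elementary_grading_inducing_transpose_grading (n : ℕ) (hn : 2 < n) :
    ¬ ∃ k l : ℕ, k + l = n ∧ k ^ 2 + l ^ 2 = n * (n - 1) / 2 + 1 ∧
      2 * k * l + 1 = n * (n + 1) / 2 := by
  rintro ⟨k, l, h1, h2, h3⟩
  obtain ⟨m, rfl⟩ : ∃ m, n = m + 3 := ⟨n - 3, by omega⟩
  have hs : m + 3 - 1 = m + 2 := rfl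
  have e1 : (m + 3) * (m + 3 - 1) / 2 = (m * m + 5 * m + 6) / 2 := by rw [hs]; ring_nf
  have e2 : (m + 3) * (m + 3 + 1) / 2 = (m * m + 7 * m + 12) / 2 := by ring_nf
  have hev : 2 ∣ m * m + 5 * m + 6 := by
    rcases Nat.even_or_odd m with ⟨t, rfl⟩ | ⟨t, rfl⟩
    · exact ⟨2 * t * t + 5 * t + 3, by ring⟩
    · exact ⟨2 * t * t + 7 * t + 6, by ring⟩
  have hev2 : 2 ∣ m * m + 7 * m + 12 := by
    rcases Nat.even_or_odd m with ⟨t, rfl⟩ | ⟨t, rfl⟩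
    · exact ⟨2 * t * t + 7 * t + 6, by ring⟩
    · exact ⟨2 * t * t + 9 * t + 10, by ring⟩
  obtain ⟨a, ha⟩ := hev
  obtain ⟨b, hb⟩ := hev2
  rw [e1, ha, Nat.mul_div_cancel_left _ two_pos] at h2
  rw [e2, hb, Nat.mul_div_cancel_left _ two_pos] at h3
  nlinarith [sq_nonneg (k - l : ℤ), sq_nonneg ((k : ℤ) - l)]
end

section
/- Let G be a finite abelian group, F a field containing a primitive |G|-th root of unity, R = ⊕_{g∈G} R_g a G-graded algebra, H ≤ G and Λ ≤ Ĝ subgroups with H = Λ^⊥. Then an element a ∈ R is homogeneous in the induced G/H-grading (with components R_{gH} = ⊕_{h∈H} R_{gh}) if and only if a is a common eigenvector for the action of all χ ∈ Λ. A subspace V ⊆ R is G/H-graded if and only if Λ * V ⊆ V. -/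
/-!
Write `H = Λ^⊥`. Every `χ ∈ Λ` is constant on the cosets of `H`, so it acts on the
`gH`-component of the coarsened grading by the scalar `χ(gH)`; and by the definition of `Λ^⊥`
these scalars separate the cosets. Both claims are then instances of a statement about a
spanning family of joint eigenspaces `𝒩 q` of operators `T k` whose weights separate the indices:
an invariant subspace contains the components of its elements (peel off one component at a
time with `T k - w k q`), and a common eigenvector `a` spans an invariant line, which therefore
meets some `𝒩 q` nontrivially.
-/

/-- The annihilator `Λ^⊥ = {g ∈ G : λ(g) = 1 for all λ ∈ Λ}` of a set of characters. -/
def perpSubgroup {G F : Type*} [CommGroup G] [Field F] (Λ : Subgroup (G →* Fˣ)) :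
    Subgroup G where
  carrier := {g | ∀ χ ∈ Λ, χ g = 1}
  one_mem' := by intro χ hχ; simp
  mul_mem' := by intro a b ha hb χ hχ; rw [map_mul, ha χ hχ, hb χ hχ, mul_one]
  inv_mem' := by intro a ha χ hχ; rw [map_inv, ha χ hχ, inv_one]

open Function Module Submodule

section JointEigenspaces

variable {K Q F M : Type*} [Field F] [AddCommGroup M] [Module F M]
  {𝒩 : Q → Submodule F M} {T : K → End F M} {w : K → Q → F}

theorem mem_of_sum_mem_of_forall_mapsTo (hT : ∀ k q, 𝒩 q ≤ (T k).eigenspace (w k q))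
    (hw : Injective (swap w)) {V : Submodule F M} (hV : ∀ k, ∀ v ∈ V, T k v ∈ V)
    (s : Finset Q) (v : Q → M) (hv : ∀ q ∈ s, v q ∈ 𝒩 q) (hsum : ∑ q ∈ s, v q ∈ V) :
    ∀ q ∈ s, v q ∈ V := by
  classical
  induction s using Finset.induction_on generalizing v with
  | empty => simp
  | insert a s ha ih =>
    have hs : ∀ q ∈ s, v q ∈ V := by
      intro q hq
      obtain ⟨k, hk⟩ : ∃ k, w k q ≠ w k a := by
        by_contra! h
        exact ha (hw (funext h) ▸ hq)
      have eig : ∀ q ∈ insert a s, T k (v q) = w k q • v q := fun q hq =>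
        Module.End.mem_eigenspace_iff.mp (hT k q (hv q hq))
      have hshift : ∑ q ∈ s, (w k q - w k a) • v q =
          T k (∑ q ∈ insert a s, v q) - w k a • ∑ q ∈ insert a s, v q := by
        rw [map_sum, Finset.sum_congr rfl eig, Finset.smul_sum, ← Finset.sum_sub_distrib,
          Finset.sum_insert ha, sub_self, zero_add]
        simp only [sub_smul]
      have hmem := ih (fun q => (w k q - w k a) • v q)
        (fun q hq => (𝒩 q).smul_mem _ (hv q (Finset.mem_insert_of_mem hq)))
        (hshift ▸ V.sub_mem (hV k _ hsum) (V.smul_mem _ hsum)) q hq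
      exact (V.smul_mem_iff (sub_ne_zero.mpr hk)).mp hmem
    intro q hq
    rcases Finset.mem_insert.mp hq with rfl | hq
    · rw [Finset.sum_insert ha] at hsum
      simpa using V.sub_mem hsum (V.sum_mem hs)
    · exact hs q hq

theorem eq_iSup_inf_iff_forall_mapsTo (hT : ∀ k q, 𝒩 q ≤ (T k).eigenspace (w k q))
    (hw : Injective (swap w)) (h𝒩 : ⨆ q, 𝒩 q = ⊤) (V : Submodule F M) :
    V = ⨆ q, V ⊓ 𝒩 q ↔ ∀ k, ∀ v ∈ V, T k v ∈ V := by
  constructor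
  · intro hV k
    suffices ⨆ q, V ⊓ 𝒩 q ≤ (⨆ q, V ⊓ 𝒩 q).comap (T k) from fun v hv => hV ▸ this (hV ▸ hv)
    refine iSup_le fun q x hx => mem_iSup_of_mem q ?_
    rw [Module.End.mem_eigenspace_iff.mp (hT k q (mem_inf.mp hx).2)]
    exact (V ⊓ 𝒩 q).smul_mem _ hx
  · intro hV
    refine le_antisymm (fun v hv => ?_) (iSup_le fun q => inf_le_left)
    obtain ⟨f, hf, rfl⟩ := (mem_iSup_iff_exists_finsupp 𝒩 v).mp (h𝒩 ▸ mem_top)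
    have hfV := mem_of_sum_mem_of_forall_mapsTo hT hw hV f.support f (fun q _ => hf q) hv
    exact sum_mem fun q hq => mem_iSup_of_mem q (mem_inf.mpr ⟨hfV q hq, hf q⟩)

theorem exists_mem_iff_forall_exists_smul [Nonempty Q]
    (hT : ∀ k q, 𝒩 q ≤ (T k).eigenspace (w k q)) (hw : Injective (swap w))
    (h𝒩 : ⨆ q, 𝒩 q = ⊤) (a : M) :
    (∃ q, a ∈ 𝒩 q) ↔ ∀ k, ∃ c : F, T k a = c • a := by
  refine ⟨fun ⟨q, hq⟩ k => ⟨w k q, Module.End.mem_eigenspace_iff.mp (hT k q hq)⟩, fun ha => ?_⟩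
  have hline : ∀ k, ∀ v ∈ F ∙ a, T k v ∈ F ∙ a := by
    intro k v hv
    obtain ⟨d, rfl⟩ := mem_span_singleton.mp hv
    obtain ⟨c, hc⟩ := ha k
    rw [map_smul, hc, smul_smul]
    exact mem_span_singleton.mpr ⟨_, rfl⟩
  have hsplit := (eq_iSup_inf_iff_forall_mapsTo hT hw h𝒩 _).mpr hline
  by_cases h : ∃ q, (F ∙ a) ⊓ 𝒩 q ≠ ⊥
  · obtain ⟨q, hq⟩ := h
    obtain ⟨x, hx, hx0⟩ := (Submodule.ne_bot_iff _).mp hq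
    obtain ⟨c, rfl⟩ := mem_span_singleton.mp (mem_inf.mp hx).1
    have hc : c ≠ 0 := by
      rintro rfl
      exact hx0 (zero_smul F a)
    exact ⟨q, ((𝒩 q).smul_mem_iff hc).mp (mem_inf.mp hx).2⟩
  · push Not at h
    rw [iSup_eq_bot.mpr h, span_singleton_eq_bot] at hsplit
    exact ⟨Classical.arbitrary Q, hsplit ▸ zero_mem _⟩

end JointEigenspaces

def coarseGrading {ι Q R M : Type*} [Semiring R] [AddCommMonoid M] [Module R M]
    (ℳ : ι → Submodule R M) (π : ι → Q) (q : Q) : Submodule R M :=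
  ⨆ (i) (_ : π i = q), ℳ i

theorem iSup_coarseGrading {ι Q R M : Type*} [Semiring R] [AddCommMonoid M] [Module R M]
    (ℳ : ι → Submodule R M) (π : ι → Q) : ⨆ q, coarseGrading ℳ π q = ⨆ i, ℳ i := by
  unfold coarseGrading
  rw [iSup_comm]
  exact iSup_congr fun i => iSup_iSup_eq_right

section Characters

variable {G F : Type*} [CommGroup G] [Field F] (Λ : Subgroup (G →* Fˣ))

theorem perpSubgroup_le_ker {χ : G →* Fˣ} (hχ : χ ∈ Λ) : perpSubgroup Λ ≤ χ.ker :=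
  fun _ hg => hg χ hχ

def perpLift (χ : Λ) : G ⧸ perpSubgroup Λ →* Fˣ :=
  QuotientGroup.lift _ χ.1 (perpSubgroup_le_ker Λ χ.2)

theorem perpLift_mk (χ : Λ) (g : G) : perpLift Λ χ g = χ.1 g :=
  QuotientGroup.lift_mk _ _ g

theorem injective_swap_perpLift : Injective (swap fun (χ : Λ) x => (perpLift Λ χ x : F)) := by
  intro x y hxy
  induction x using QuotientGroup.induction_on with | H g => ?_
  induction y using QuotientGroup.induction_on with | H g' => ?_
  refine QuotientGroup.eq.mpr fun χ hχ => ?_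
  have hχg : χ g = χ g' := Units.ext <| by
    simpa [swap, perpLift_mk] using congrFun hxy ⟨χ, hχ⟩
  rw [map_mul, map_inv, hχg, inv_mul_cancel]

theorem coarseGrading_le_eigenspace {R : Type*} [AddCommGroup R] [Module F R]
    (Rg : G → Submodule F R) (act : (G →* Fˣ) → R →ₗ[F] R)
    (hact : ∀ (χ : G →* Fˣ) (g : G), ∀ x ∈ Rg g, act χ x = (χ g : F) • x)
    (χ : Λ) (x : G ⧸ perpSubgroup Λ) :
    coarseGrading Rg QuotientGroup.mk x ≤ Module.End.eigenspace (act χ) (perpLift Λ χ x) :=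
  iSup₂_le fun g hg y hy => by
    rw [Module.End.mem_eigenspace_iff, hact _ g y hy, ← hg, perpLift_mk]

end Characters

theorem quotient_graded_iff_subgroup_eigen_general
    {F G R : Type*} [Field F] [CommGroup G] [DecidableEq G]
    [NonUnitalNonAssocRing R] [Module F R]
    (Rg : G → Submodule F R) (hdec : DirectSum.IsInternal Rg)
    (Λ : Subgroup (G →* Fˣ))
    (act : (G →* Fˣ) → R →ₗ[F] R)
    (hact : ∀ (χ : G →* Fˣ) (g : G), ∀ x ∈ Rg g, act χ x = (χ g : F) • x) :
    (∀ a : R,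
      (∃ x : G ⧸ perpSubgroup (F := F) Λ,
          a ∈ ⨆ (g : G) (_ : (QuotientGroup.mk g : G ⧸ perpSubgroup (F := F) Λ) = x), Rg g) ↔
        ∀ χ ∈ Λ, ∃ c : F, act χ a = c • a) ∧
    (∀ V : Submodule F R,
      (V = ⨆ x : G ⧸ perpSubgroup (F := F) Λ,
          V ⊓ ⨆ (g : G) (_ : (QuotientGroup.mk g : G ⧸ perpSubgroup (F := F) Λ) = x), Rg g) ↔
        ∀ χ ∈ Λ, ∀ v ∈ V, act χ v ∈ V) := by
  have hT := coarseGrading_le_eigenspace Λ Rg act hact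
  have hsep := injective_swap_perpLift Λ
  have htop : ⨆ x, coarseGrading Rg (QuotientGroup.mk : G → G ⧸ perpSubgroup Λ) x = ⊤ :=
    (iSup_coarseGrading Rg _).trans hdec.submodule_iSup_eq_top
  exact ⟨fun a => (exists_mem_iff_forall_exists_smul (T := fun χ : Λ => act χ) hT hsep htop a).trans Subtype.forall,
    fun V => (eq_iSup_inf_iff_forall_mapsTo (T := fun χ : Λ => act χ) hT hsep htop V).trans Subtype.forall⟩

/-- Let `H = Λ^⊥` for a subgroup `Λ ≤ Ĝ`. An element `a ∈ R` is
homogeneous in the induced `G/H`-grading iff `a` is a common eigenvector for all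
`χ ∈ Λ`, and a subspace `V` is `G/H`-graded iff `Λ * V ⊆ V`. -/
theorem quotient_graded_iff_subgroup_eigen
    {F G R : Type*} [Field F] [CommGroup G] [Fintype G] [DecidableEq G]
    [NonUnitalNonAssocRing R] [Module F R] [SMulCommClass F R R] [IsScalarTower F R R]
    (hroot : ∃ ζ : F, IsPrimitiveRoot ζ (Fintype.card G))
    (Rg : G → Submodule F R) (hdec : DirectSum.IsInternal Rg)
    (hmul : ∀ g h : G, ∀ x ∈ Rg g, ∀ y ∈ Rg h, x * y ∈ Rg (g * h))
    (Λ : Subgroup (G →* Fˣ))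
    (act : (G →* Fˣ) → R →ₗ[F] R)
    (hact : ∀ (χ : G →* Fˣ) (g : G), ∀ x ∈ Rg g, act χ x = (χ g : F) • x) :
    (∀ a : R,
      (∃ x : G ⧸ perpSubgroup (F := F) Λ,
          a ∈ ⨆ (g : G) (_ : (QuotientGroup.mk g : G ⧸ perpSubgroup (F := F) Λ) = x), Rg g) ↔
        ∀ χ ∈ Λ, ∃ c : F, act χ a = c • a) ∧
    (∀ V : Submodule F R,
      (V = ⨆ x : G ⧸ perpSubgroup (F := F) Λ,
          V ⊓ ⨆ (g : G) (_ : (QuotientGroup.mk g : G ⧸ perpSubgroup (F := F) Λ) = x), Rg g) ↔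
        ∀ χ ∈ Λ, ∀ v ∈ V, act χ v ∈ V) :=
  quotient_graded_iff_subgroup_eigen_general Rg hdec Λ act hact
end

section
/- Let Γ be a finite abelian group and Λ ≤ Γ a subgroup of index 2. Then there exist φ ∈ Γ \ Λ whose order is a power of 2 (say 2^k, k ≥ 1), and a subgroup Λ₁ ≤ Λ, such that Γ = ⟨φ⟩ × Λ₁ and Λ = ⟨φ²⟩ × Λ₁. -/
open Finset

private lemma pow_mem_iff_of_index_two {Γ : Type*} [CommGroup Γ] {Λ : Subgroup Γ}
    (hΛ : Λ.index = 2) {γ : Γ} (hγ : γ ∉ Λ) (m : ℕ) : γ ^ m ∈ Λ ↔ 2 ∣ m := by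
  induction m with
  | zero => simpa using one_mem Λ
  | succ m ih =>
    have h2 : (γ ^ m ∈ Λ ↔ γ ∈ Λ) ↔ ¬ (2 ∣ m) := by
      simp only [hγ, iff_false, ih]
    rw [pow_succ, Subgroup.mul_mem_iff_of_index_two hΛ, h2]
    omega

private lemma key_lemma {Γ : Type*} [CommGroup Γ] (Λ : Subgroup Γ) (hΛ : Λ.index = 2)
    (φ : Γ) (k : ℕ) (hk : 1 ≤ k) (hord : orderOf φ = 2 ^ k)
    (r : Γ →* Multiplicative (ZMod (2 ^ k)))
    (hu : IsUnit (Multiplicative.toAdd (r φ)))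
    (hiff : ∀ γ : Γ, γ ∈ Λ ↔ 2 ∣ (Multiplicative.toAdd (r γ)).val) :
    ∃ (Λ₁ : Subgroup Γ),
      φ ∉ Λ ∧ Λ₁ ≤ Λ ∧
      Subgroup.zpowers φ ⊔ Λ₁ = ⊤ ∧ Subgroup.zpowers φ ⊓ Λ₁ = ⊥ ∧
      Subgroup.zpowers (φ ^ 2) ⊔ Λ₁ = Λ ∧ Subgroup.zpowers (φ ^ 2) ⊓ Λ₁ = ⊥ := by
  haveI : NeZero (2 ^ k) := ⟨pow_ne_zero _ two_ne_zero⟩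
  have h2dvd2k : (2 : ℕ) ∣ 2 ^ k := dvd_pow_self 2 (by omega)
  have hinv : (↑hu.unit⁻¹ : ZMod (2 ^ k)) * Multiplicative.toAdd (r φ) = 1 := by
    exact Units.inv_mul_of_eq hu.unit_spec
  -- units of ZMod (2^k) have odd value
  have hodd : ¬ 2 ∣ (Multiplicative.toAdd (r φ)).val := by
    intro h2
    have hcop : (Multiplicative.toAdd (r φ)).val.Coprime (2 ^ k) := by
      rw [← ZMod.isUnit_iff_coprime]
      rwa [ZMod.natCast_val, ZMod.cast_id]
    have : (2 : ℕ) ∣ Nat.gcd (Multiplicative.toAdd (r φ)).val (2 ^ k) :=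
      Nat.dvd_gcd h2 h2dvd2k
    rw [hcop] at this
    omega
  have hφΛ : φ ∉ Λ := fun h => hodd ((hiff φ).mp h)
  have hkerΛ : r.ker ≤ Λ := by
    intro x hx
    rw [MonoidHom.mem_ker] at hx
    rw [hiff x, hx]
    simp
  -- the inf fact, proved once
  have hinf : Subgroup.zpowers φ ⊓ r.ker = ⊥ := by
    rw [eq_bot_iff]
    intro x hx
    rw [Subgroup.mem_inf] at hx
    obtain ⟨hx1, hker⟩ := hx
    obtain ⟨i, rfl⟩ := Subgroup.mem_zpowers_iff.mp hx1
    rw [MonoidHom.mem_ker] at hker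
    have h0 : Multiplicative.toAdd (r (φ ^ i)) = 0 := by rw [hker]; rfl
    rw [map_zpow, toAdd_zpow, zsmul_eq_mul] at h0
    have hi0 : (i : ZMod (2 ^ k)) = 0 := (hu.mul_left_eq_zero).mp h0
    rw [ZMod.intCast_zmod_eq_zero_iff_dvd] at hi0
    have : φ ^ i = 1 := by
      rw [← orderOf_dvd_iff_zpow_eq_one, hord]
      exact_mod_cast hi0
    simp [this, Subgroup.mem_bot]
  -- decomposition
  have hdec : ∀ γ : Γ, ∀ j : ℕ,
      ((j : ZMod (2 ^ k)) = Multiplicative.toAdd (r γ) * ↑hu.unit⁻¹) →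
      γ * (φ ^ j)⁻¹ ∈ r.ker := by
    intro γ j hj
    rw [MonoidHom.mem_ker]
    have h0 : Multiplicative.toAdd (r (γ * (φ ^ j)⁻¹)) = (0 : ZMod (2 ^ k)) := by
      rw [map_mul, map_inv, map_pow, toAdd_mul, toAdd_inv, toAdd_pow, nsmul_eq_mul, hj,
        mul_assoc, hinv, mul_one]
      ring
    have h1 : Multiplicative.toAdd (r (γ * (φ ^ j)⁻¹)) = Multiplicative.toAdd
        (1 : Multiplicative (ZMod (2 ^ k))) := by rw [h0]; rfl
    exact Multiplicative.toAdd.injective h1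
  refine ⟨r.ker, hφΛ, hkerΛ, ?_, hinf, ?_, ?_⟩
  · -- zpowers φ ⊔ ker = ⊤
    rw [eq_top_iff]
    intro γ _
    set j : ℕ := (Multiplicative.toAdd (r γ) * ↑hu.unit⁻¹).val with hjdef
    have hj : (j : ZMod (2 ^ k)) = Multiplicative.toAdd (r γ) * ↑hu.unit⁻¹ := by
      rw [hjdef, ZMod.natCast_val, ZMod.cast_id]
    have hmem := hdec γ j hj
    have hγeq : γ = φ ^ j * (γ * (φ ^ j)⁻¹) := by
      rw [mul_comm γ, mul_inv_cancel_left]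
    rw [hγeq]
    exact mul_mem (Subgroup.mem_sup_left (pow_mem (Subgroup.mem_zpowers φ) j))
      (Subgroup.mem_sup_right hmem)
  · -- zpowers (φ^2) ⊔ ker = Λ
    apply le_antisymm
    · apply sup_le
      · rw [Subgroup.zpowers_le]
        exact Subgroup.sq_mem_of_index_two hΛ φ
      · exact hkerΛ
    · intro γ hγ
      rw [hiff] at hγ
      set j : ℕ := (Multiplicative.toAdd (r γ) * ↑hu.unit⁻¹).val with hjdef
      have hj : (j : ZMod (2 ^ k)) = Multiplicative.toAdd (r γ) * ↑hu.unit⁻¹ := by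
        rw [hjdef, ZMod.natCast_val, ZMod.cast_id]
      have hmem := hdec γ j hj
      have hjeven : 2 ∣ j := by
        rw [hjdef, ZMod.val_mul]
        apply (Nat.dvd_mod_iff h2dvd2k).mpr
        apply Dvd.dvd.mul_right
        exact hγ
      obtain ⟨s, hs⟩ := hjeven
      have hγeq : γ = (φ ^ 2) ^ s * (γ * (φ ^ j)⁻¹) := by
        rw [← pow_mul, ← hs, mul_comm γ, mul_inv_cancel_left]
      rw [hγeq]
      exact mul_mem (Subgroup.mem_sup_left (pow_mem (Subgroup.mem_zpowers _) s))
        (Subgroup.mem_sup_right hmem)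
  · -- zpowers (φ^2) ⊓ ker = ⊥
    rw [eq_bot_iff, ← hinf]
    apply inf_le_inf_right
    rw [Subgroup.zpowers_le]
    exact Subgroup.mem_zpowers_iff.mpr ⟨((2:ℕ):ℤ), zpow_natCast φ 2⟩

/-- If `Λ` is an index-2 subgroup of a finite abelian group `Γ`, then there
exist `φ ∈ Γ \ Λ` of 2-power order `2^k` (`k ≥ 1`) and a subgroup `Λ₁ ≤ Λ` such that
`Γ = ⟨φ⟩ × Λ₁` (internally) and `Λ = ⟨φ²⟩ × Λ₁`. -/
theorem index_two_complement
    {Γ : Type*} [CommGroup Γ] [Finite Γ] (Λ : Subgroup Γ) (hΛ : Λ.index = 2) :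
    ∃ (φ : Γ) (k : ℕ) (Λ₁ : Subgroup Γ),
      φ ∉ Λ ∧ 1 ≤ k ∧ orderOf φ = 2 ^ k ∧ Λ₁ ≤ Λ ∧
      Subgroup.zpowers φ ⊔ Λ₁ = ⊤ ∧ Subgroup.zpowers φ ⊓ Λ₁ = ⊥ ∧
      Subgroup.zpowers (φ ^ 2) ⊔ Λ₁ = Λ ∧ Subgroup.zpowers (φ ^ 2) ⊓ Λ₁ = ⊥ := by
  classical
  obtain ⟨ι, _, n, hn, ⟨e⟩⟩ := CommGroup.equiv_prod_multiplicative_zmod_of_finite Γ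
  have hn0 : ∀ i, n i ≠ 0 := fun i => by have := hn i; omega
  haveI : ∀ i, NeZero (n i) := fun i => ⟨hn0 i⟩
  -- the generators
  set g : ι → Γ := fun i => e.symm (Pi.mulSingle i (Multiplicative.ofAdd (1 : ZMod (n i))))
    with hg
  -- single of arbitrary a as a power of g i
  have hsingle_pow : ∀ (i : ι) (a : ZMod (n i)),
      e.symm (Pi.mulSingle i (Multiplicative.ofAdd a)) = g i ^ a.val := by
    intro i a
    have h1 : (Multiplicative.ofAdd a) = (Multiplicative.ofAdd (1 : ZMod (n i))) ^ a.val := by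
      apply Multiplicative.toAdd.injective
      rw [toAdd_pow, toAdd_ofAdd, toAdd_ofAdd, nsmul_eq_mul, mul_one,
        ZMod.natCast_val, ZMod.cast_id]
    rw [hg, h1, Pi.mulSingle_pow, map_pow]
  -- decomposition of an arbitrary element
  have hdecomp : ∀ γ : Γ, γ = ∏ i : ι, e.symm (Pi.mulSingle i (e γ i)) := by
    intro γ
    rw [← map_prod, Finset.univ_prod_mulSingle, MulEquiv.symm_apply_apply]
  set S : Finset ι := Finset.univ.filter (fun i => g i ∉ Λ) with hS
  have hgS : ∀ i, i ∈ S ↔ g i ∉ Λ := by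
    intro i; rw [hS, Finset.mem_filter]; simp
  -- S is nonempty
  have hSne : S.Nonempty := by
    rw [Finset.nonempty_iff_ne_empty]
    intro hemp
    have hall : ∀ i, g i ∈ Λ := by
      intro i
      by_contra h
      have : i ∈ S := (hgS i).mpr h
      rw [hemp] at this
      exact absurd this (Finset.notMem_empty i)
    have htop : ∀ γ : Γ, γ ∈ Λ := by
      intro γ
      rw [hdecomp γ]
      apply Subgroup.prod_mem
      intro i _
      have h1 : e γ i = Multiplicative.ofAdd (Multiplicative.toAdd (e γ i)) := rfl
      rw [h1, hsingle_pow i]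
      exact pow_mem (hall i) _
    have : Λ = ⊤ := by ext x; simpa using htop x
    rw [this, Subgroup.index_top] at hΛ
    omega
  -- all n i for i ∈ S are even
  have hSeven : ∀ i ∈ S, 2 ∣ n i := by
    intro i hi
    have hgi : g i ∉ Λ := (hgS i).mp hi
    by_contra h2
    have hord_g : g i ^ (n i) = 1 := by
      rw [hg, ← map_pow, ← Pi.mulSingle_pow]
      have : (Multiplicative.ofAdd (1 : ZMod (n i))) ^ (n i) = 1 := by
        apply Multiplicative.toAdd.injective
        rw [toAdd_pow, toAdd_ofAdd, nsmul_eq_mul, mul_one]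
        simp
      rw [this]
      simp
    obtain ⟨m, hm⟩ : ∃ m, 2 * m = n i + 1 := ⟨(n i + 1) / 2, by omega⟩
    have heq : g i = (g i ^ 2) ^ m := by
      rw [← pow_mul, hm, pow_succ, hord_g, one_mul]
    exact hgi (heq ▸ pow_mem (Subgroup.sq_mem_of_index_two hΛ _) m)
  have hv1 : ∀ i ∈ S, 1 ≤ (n i).factorization 2 := fun i hi =>
    Nat.Prime.factorization_pos_of_dvd Nat.prime_two (hn0 i) (hSeven i hi)
  -- minimal 2-adic valuation
  set k : ℕ := (S.image fun i => (n i).factorization 2).min' (hSne.image _) with hk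
  obtain ⟨i₀, hi₀S, hi₀⟩ : ∃ i ∈ S, (n i).factorization 2 = k := by
    have hmem := Finset.min'_mem (S.image fun i => (n i).factorization 2) (hSne.image _)
    rw [Finset.mem_image] at hmem
    obtain ⟨i, hiS, hieq⟩ := hmem
    exact ⟨i, hiS, by rw [hieq, hk]⟩
  have hk1 : 1 ≤ k := hi₀ ▸ hv1 i₀ hi₀S
  have hkle : ∀ i ∈ S, k ≤ (n i).factorization 2 := fun i hi =>
    Finset.min'_le _ _ (Finset.mem_image_of_mem _ hi)
  have h2k_dvd : ∀ i ∈ S, 2 ^ k ∣ n i := fun i hi =>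
    dvd_trans (pow_dvd_pow 2 (hkle i hi)) (Nat.ordProj_dvd (n i) 2)
  haveI : NeZero (2 ^ k) := ⟨pow_ne_zero _ two_ne_zero⟩
  set m₀ : ℕ := n i₀ / 2 ^ k with hm₀
  have hm₀odd : ¬ 2 ∣ m₀ := by
    have h := Nat.not_dvd_ordCompl Nat.prime_two (hn0 i₀)
    rw [hm₀, ← hi₀]
    exact h
  have hm₀dvd : m₀ ∣ n i₀ := Nat.div_dvd_of_dvd (h2k_dvd i₀ hi₀S)
  have hni₀ : 2 ^ k * m₀ = n i₀ := Nat.mul_div_cancel' (h2k_dvd i₀ hi₀S)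
  have hm₀pos : 0 < m₀ := by
    rcases Nat.eq_zero_or_pos m₀ with h | h
    · rw [h, mul_zero] at hni₀; exact absurd hni₀.symm (hn0 i₀)
    · exact h
  -- the element φ
  set φ : Γ := e.symm (Pi.mulSingle i₀ (Multiplicative.ofAdd ((m₀ : ZMod (n i₀))))) with hφ
  have hordφ : orderOf φ = 2 ^ k := by
    rw [hφ, MulEquiv.orderOf_eq, orderOf_piMulSingle,
      orderOf_ofAdd_eq_addOrderOf, ZMod.addOrderOf_coe m₀ (hn0 i₀),
      Nat.gcd_eq_right hm₀dvd, ← hni₀, Nat.mul_div_cancel _ hm₀pos]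
  -- the character r
  set F : ∀ i, Multiplicative (ZMod (n i)) →* Multiplicative (ZMod (2 ^ k)) := fun i =>
    if h : i ∈ S then
      AddMonoidHom.toMultiplicative ((ZMod.castHom (h2k_dvd i h) (ZMod (2 ^ k))).toAddMonoidHom)
    else 1
    with hF
  set r : Γ →* Multiplicative (ZMod (2 ^ k)) :=
    ∏ i : ι, (F i).comp ((Pi.evalMonoidHom (fun i => Multiplicative (ZMod (n i))) i).comp
      e.toMonoidHom) with hr
  have hr_apply : ∀ γ : Γ, r γ = ∏ i : ι, F i (e γ i) := by
    intro γ
    rw [hr, MonoidHom.finset_prod_apply]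
    rfl
  have hr_single : ∀ (i : ι) (a : ZMod (n i)),
      r (e.symm (Pi.mulSingle i (Multiplicative.ofAdd a))) = F i (Multiplicative.ofAdd a) := by
    intro i a
    rw [hr_apply]
    have he : e (e.symm (Pi.mulSingle i (Multiplicative.ofAdd a))) =
        Pi.mulSingle i (Multiplicative.ofAdd a) := e.apply_symm_apply _
    rw [he]
    rw [Finset.prod_eq_single i]
    · rw [Pi.mulSingle_eq_same]
    · intro j _ hji
      rw [Pi.mulSingle_eq_of_ne hji, map_one]
    · intro h
      exact absurd (Finset.mem_univ i) h
  -- value at φ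
  have hrφ : Multiplicative.toAdd (r φ) = ((m₀ : ZMod (2 ^ k))) := by
    rw [hφ, hr_single i₀]
    simp only [hF]
    rw [dif_pos hi₀S]
    simp only [AddMonoidHom.toMultiplicative_apply_apply, toAdd_ofAdd]
    simp only [RingHom.toAddMonoidHom_eq_coe, AddMonoidHom.coe_coe]; rw [map_natCast]
  have hunit : IsUnit (Multiplicative.toAdd (r φ)) := by
    rw [hrφ, ZMod.isUnit_iff_coprime]
    exact Nat.Coprime.pow_right k
      (((Nat.Prime.coprime_iff_not_dvd Nat.prime_two).mpr hm₀odd).symm)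
  -- membership characterization
  have hsingle_mem : ∀ (i : ι) (a : ZMod (n i)),
      e.symm (Pi.mulSingle i (Multiplicative.ofAdd a)) ∈ Λ ↔
        2 ∣ (Multiplicative.toAdd (F i (Multiplicative.ofAdd a))).val := by
    intro i a
    by_cases hi : i ∈ S
    · rw [hsingle_pow i a, pow_mem_iff_of_index_two hΛ ((hgS i).mp hi)]
      simp only [hF]
      rw [dif_pos hi]
      simp only [AddMonoidHom.toMultiplicative_apply_apply, toAdd_ofAdd]
      simp only [RingHom.toAddMonoidHom_eq_coe, AddMonoidHom.coe_coe]
      rw [ZMod.castHom_apply, ← ZMod.natCast_val, ZMod.val_natCast]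
      rw [Nat.dvd_mod_iff (dvd_pow_self 2 (by omega))]
    · have hgi : g i ∈ Λ := by
        by_contra h
        exact hi ((hgS i).mpr h)
      rw [hsingle_pow i a]
      constructor
      · intro _
        simp only [hF]
        rw [dif_neg hi]
        simp
      · intro _
        exact pow_mem hgi _
  -- the sign character ν
  have hν_mul : ∀ a b : Γ,
      (if a * b ∈ Λ then (0 : ZMod 2) else 1) =
        (if a ∈ Λ then (0 : ZMod 2) else 1) + (if b ∈ Λ then (0 : ZMod 2) else 1) := by
    intro a b
    rcases em (a ∈ Λ) with ha | ha <;> rcases em (b ∈ Λ) with hb | hb <;>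
      rw [Subgroup.mul_mem_iff_of_index_two hΛ] <;> simp [ha, hb] <;> decide
  set ν : Γ →* Multiplicative (ZMod 2) := MonoidHom.mk'
    (fun γ => Multiplicative.ofAdd (if γ ∈ Λ then (0 : ZMod 2) else 1))
    (by
      intro a b
      apply Multiplicative.toAdd.injective
      rw [toAdd_mul, toAdd_ofAdd, toAdd_ofAdd, toAdd_ofAdd]
      exact hν_mul a b) with hν
  have hν_apply : ∀ γ : Γ, ν γ = Multiplicative.ofAdd (if γ ∈ Λ then (0 : ZMod 2) else 1) :=
    fun _ => rfl
  -- c2 : reduction mod 2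
  set c2 : Multiplicative (ZMod (2 ^ k)) →* Multiplicative (ZMod 2) :=
    AddMonoidHom.toMultiplicative
      ((ZMod.castHom (dvd_pow_self 2 (by omega) : (2:ℕ) ∣ 2 ^ k) (ZMod 2)).toAddMonoidHom)
    with hc2def
  have hc2 : ∀ y : Multiplicative (ZMod (2 ^ k)),
      c2 y = 1 ↔ 2 ∣ (Multiplicative.toAdd y).val := by
    intro y
    rw [hc2def]
    simp only [AddMonoidHom.toMultiplicative_apply_apply]
    simp only [RingHom.toAddMonoidHom_eq_coe, AddMonoidHom.coe_coe]
    rw [ZMod.castHom_apply, ← ZMod.natCast_val]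
    constructor
    · intro h
      have h0 : ((Multiplicative.toAdd y).val : ZMod 2) = 0 := by
        have := congrArg Multiplicative.toAdd h
        simpa using this
      rwa [ZMod.natCast_eq_zero_iff] at h0
    · intro h
      have h0 : ((Multiplicative.toAdd y).val : ZMod 2) = 0 :=
        (ZMod.natCast_eq_zero_iff _ 2).mpr h
      apply Multiplicative.toAdd.injective
      simpa using h0
  -- per-generator equality of ν and c2 ∘ r
  have hsing_eq : ∀ (i : ι) (a : ZMod (n i)),
      ν (e.symm (Pi.mulSingle i (Multiplicative.ofAdd a))) =
        c2 (r (e.symm (Pi.mulSingle i (Multiplicative.ofAdd a)))) := by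
    intro i a
    rw [hr_single i a]
    rcases em (e.symm (Pi.mulSingle i (Multiplicative.ofAdd a)) ∈ Λ) with h | h
    · rw [hν_apply, if_pos h]
      have := (hc2 (F i (Multiplicative.ofAdd a))).mpr ((hsingle_mem i a).mp h)
      rw [this]
      rfl
    · rw [hν_apply, if_neg h]
      have hne : c2 (F i (Multiplicative.ofAdd a)) ≠ 1 := by
        intro hcon
        exact h ((hsingle_mem i a).mpr ((hc2 _).mp hcon))
      have hcases : ∀ x : Multiplicative (ZMod 2), x ≠ 1 → x = Multiplicative.ofAdd 1 := by
        decide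
      rw [hcases _ hne]
  -- global equality
  have hνr : ∀ γ : Γ, ν γ = c2 (r γ) := by
    intro γ
    calc ν γ = ∏ i : ι, ν (e.symm (Pi.mulSingle i (e γ i))) := by
          rw [← map_prod, ← hdecomp]
      _ = ∏ i : ι, c2 (r (e.symm (Pi.mulSingle i (e γ i)))) :=
          Finset.prod_congr rfl fun i _ => hsing_eq i (Multiplicative.toAdd (e γ i))
      _ = c2 (r γ) := by rw [← map_prod, ← map_prod, ← hdecomp]
  have hiff : ∀ γ : Γ, γ ∈ Λ ↔ 2 ∣ (Multiplicative.toAdd (r γ)).val := by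
    intro γ
    rw [← hc2, ← hνr, hν_apply]
    constructor
    · intro h
      rw [if_pos h]
      rfl
    · intro h
      by_contra hγ
      rw [if_neg hγ] at h
      have : (1 : ZMod 2) = 0 := by
        have := congrArg Multiplicative.toAdd h
        simpa using this
      exact absurd this (by decide)
  obtain ⟨Λ₁, h1, h2, h3, h4, h5, h6⟩ := key_lemma Λ hΛ φ k hk1 hordφ r hunit hiff
  exact ⟨φ, k, Λ₁, h1, hk1, hordφ, h2, h3, h4, h5, h6⟩
end

section
/- Let R = M_n(F), char F ≠ 2 and char F not dividing n, with an involution * and a G-grading R = ⊕_g R̃_g satisfying (R̃_g)* ⊆ R̃_g, G finite abelian, h ∈ G of order 2. Define, for L = sl(n): L_g = R̃_g^(−) ⊕ R̃_{gh}^(+) for g ≠ h, and L_h = R̃_h^(−) ⊕ (R̃_e^(+) ∩ L). Then L = ⊕_{g∈G} L_g and [L_g, L_{g'}] ⊆ L_{gg'}, i.e. this is a G-grading of the Lie algebra sl(n). -/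
/-!
Because `s` preserves every `R̃_g` and `2` is invertible, each `R̃_g` splits into its symmetric
and skew parts; `L_g` takes the skew part of degree `g` and the symmetric part of degree `gh`.
As `h² = 1`, every homogeneous symmetric or skew piece is used exactly once, which gives the
direct sum, and since `s [x, y] = [s y, s x]` a commutator has degree `g g'` and the opposite
product of parities, which gives `[L_g, L_g'] ⊆ L_{gg'}`.

Tracelessness comes from uniqueness of the trace: a linear functional on `M_n` vanishing on
commutators with value `n ≠ 0` at `1` is the trace. Applied to `trace ∘ s` and to the trace of
the degree-`e` component, it shows that skew elements and homogeneous elements of degree `≠ e`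
are traceless, so only `R̃_e⁽⁺⁾` needs to be cut down to `sl(n)`.
-/

namespace Matrix

variable {K m : Type*} [Field K] [Fintype m] [DecidableEq m]

theorem eq_traceLinearMap_of_map_mul_comm (hm : (Fintype.card m : K) ≠ 0)
    {τ : Matrix m m K →ₗ[K] K} (hτ : ∀ X Y, τ (X * Y) = τ (Y * X))
    (h1 : τ 1 = Fintype.card m) : τ = traceLinearMap m K K := by
  have hdiag (i j : m) : τ (single i i 1) = τ (single j j 1) := by
    simpa [single_mul_single_same] using hτ (single i j 1) (single j i 1)
  have hoff (i j : m) (hij : i ≠ j) : τ (single i j 1) = 0 := by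
    have := hτ (single i i 1) (single i j 1)
    rwa [single_mul_single_same, one_mul, single_mul_single_of_ne _ _ _ _ hij.symm,
      map_zero] at this
  have hone (i : m) : τ (single i i 1) = 1 := by
    refine (mul_eq_left₀ hm).mp ?_
    calc (Fintype.card m : K) * τ (single i i 1) = ∑ j : m, τ (single j j 1) := by
          simp [hdiag _ i]
      _ = Fintype.card m := by rw [← map_sum, sum_single_one, h1]
  refine ext_linearMap K fun i j ↦ LinearMap.ext_ring ?_
  by_cases hij : i = j
  · subst hij; simp [hone]
  · simp [hoff i j hij, trace_single_eq_of_ne (h := hij)]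

end Matrix

namespace LinearMap

section KerAddId

variable {R M : Type*} [Semiring R] [AddCommGroup M] [Module R M] (s : M →ₗ[R] M)

theorem mem_ker_add_id_iff {x : M} : x ∈ ker (s + id) ↔ s x = -x := by
  rw [mem_ker, add_apply, id_apply, add_eq_zero_iff_eq_neg]

theorem mem_ker_sub_id_iff {x : M} : x ∈ ker (s - id) ↔ s x = x := by
  rw [mem_ker, sub_apply, id_apply, sub_eq_zero]

end KerAddId

section Involution

variable {K M : Type*} [Field K] [AddCommGroup M] [Module K M] (s : M →ₗ[K] M)

def symPart : M →ₗ[K] M := (2⁻¹ : K) • (id + s)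

def skewPart : M →ₗ[K] M := (2⁻¹ : K) • (id - s)

variable {s}

theorem symPart_apply (x : M) : s.symPart x = (2⁻¹ : K) • (x + s x) := rfl

theorem skewPart_apply (x : M) : s.skewPart x = (2⁻¹ : K) • (x - s x) := rfl

theorem symPart_add_skewPart (h2 : (2 : K) ≠ 0) (x : M) : s.symPart x + s.skewPart x = x := by
  rw [symPart_apply, skewPart_apply, ← smul_add, add_add_sub_cancel, ← two_smul K,
    inv_smul_smul₀ h2]

theorem map_symPart (hinv : Function.Involutive s) (x : M) : s (s.symPart x) = s.symPart x := by
  rw [symPart_apply, map_smul, map_add, hinv, add_comm]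

theorem map_skewPart (hinv : Function.Involutive s) (x : M) :
    s (s.skewPart x) = -s.skewPart x := by
  rw [skewPart_apply, map_smul, map_sub, hinv, ← smul_neg, neg_sub]

theorem symPart_mem {p : Submodule K M} (hp : ∀ x ∈ p, s x ∈ p) {x : M} (hx : x ∈ p) :
    s.symPart x ∈ p :=
  p.smul_mem _ (p.add_mem hx (hp x hx))

theorem skewPart_mem {p : Submodule K M} (hp : ∀ x ∈ p, s x ∈ p) {x : M} (hx : x ∈ p) :
    s.skewPart x ∈ p :=
  p.smul_mem _ (p.sub_mem hx (hp x hx))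

theorem symPart_eq_self (h2 : (2 : K) ≠ 0) {x : M} (hx : s x = x) : s.symPart x = x := by
  rw [symPart_apply, hx, ← two_smul K, inv_smul_smul₀ h2]

theorem skewPart_eq_self (h2 : (2 : K) ≠ 0) {x : M} (hx : s x = -x) : s.skewPart x = x := by
  rw [skewPart_apply, hx, sub_neg_eq_add, ← two_smul K, inv_smul_smul₀ h2]

theorem symPart_eq_zero {x : M} (hx : s x = -x) : s.symPart x = 0 := by
  rw [symPart_apply, hx, add_neg_cancel, smul_zero]

theorem skewPart_eq_zero {x : M} (hx : s x = x) : s.skewPart x = 0 := by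
  rw [skewPart_apply, hx, sub_self, smul_zero]

end Involution

end LinearMap

namespace DirectSum.IsInternal

variable {ι R M : Type*} [DecidableEq ι] [Semiring R] [AddCommMonoid M] [Module R M]
  {A : ι → Submodule R M} (hA : IsInternal A)

noncomputable def proj (i : ι) : M →ₗ[R] M :=
  (A i).subtype ∘ₗ component R ι (fun i ↦ A i) i ∘ₗ
    (LinearEquiv.ofBijective (coeLinearMap A) hA).symm.toLinearMap

theorem proj_apply (i : ι) (x : M) :
    hA.proj i x = (LinearEquiv.ofBijective (coeLinearMap A) hA).symm x i :=
  rfl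

theorem proj_mem (i : ι) (x : M) : hA.proj i x ∈ A i :=
  Subtype.prop _

theorem proj_of_mem {i : ι} {x : M} (hx : x ∈ A i) : hA.proj i x = x := by
  rw [proj_apply, hA.ofBijective_coeLinearMap_of_mem hx]

theorem proj_of_mem_ne {i j : ι} {x : M} (hx : x ∈ A i) (hij : i ≠ j) : hA.proj j x = 0 := by
  rw [proj_apply, hA.ofBijective_coeLinearMap_of_mem_ne hij hx, ZeroMemClass.coe_zero]

theorem sum_proj [Fintype ι] (x : M) : ∑ i, hA.proj i x = x := by
  set e := LinearEquiv.ofBijective (coeLinearMap A) hA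
  calc ∑ i, hA.proj i x = coeLinearMap A (∑ i, of (fun i ↦ A i) i (e.symm x i)) := by
        simp only [map_sum, coeLinearMap_of, proj_apply, e]
    _ = x := by rw [sum_univ_of]; exact e.apply_symm_apply x

section GradedAlgebra

variable {R A G : Type*} [Semiring R] [Semiring A] [Module R A] [Group G] [Fintype G]
  [DecidableEq G] {Rt : G → Submodule R A} (hdec : IsInternal Rt)

theorem proj_mul_of_mem_left
    (hmul : ∀ g g' : G, ∀ x ∈ Rt g, ∀ y ∈ Rt g', x * y ∈ Rt (g * g'))
    {g : G} {x : A} (hx : x ∈ Rt g) (k : G) (y : A) :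
    hdec.proj (g * k) (x * y) = x * hdec.proj k y := by
  conv_lhs => rw [← hdec.sum_proj y, Finset.mul_sum, map_sum]
  refine (Finset.sum_eq_single k (fun k' _ hk' ↦ ?_) (by simp)).trans ?_
  · exact hdec.proj_of_mem_ne (hmul _ _ _ hx _ (hdec.proj_mem k' y)) (by simpa using hk')
  · exact hdec.proj_of_mem (hmul _ _ _ hx _ (hdec.proj_mem k y))

theorem proj_mul_of_mem_right
    (hmul : ∀ g g' : G, ∀ x ∈ Rt g, ∀ y ∈ Rt g', x * y ∈ Rt (g * g'))
    {g : G} {x : A} (hx : x ∈ Rt g) (k : G) (y : A) :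
    hdec.proj (k * g) (y * x) = hdec.proj k y * x := by
  conv_lhs => rw [← hdec.sum_proj y, Finset.sum_mul, map_sum]
  refine (Finset.sum_eq_single k (fun k' _ hk' ↦ ?_) (by simp)).trans ?_
  · exact hdec.proj_of_mem_ne (hmul _ _ _ (hdec.proj_mem k' y) _ hx) (by simpa using hk')
  · exact hdec.proj_of_mem (hmul _ _ _ (hdec.proj_mem k y) _ hx)

/-- `proj 1 1` is a right unit on every homogeneous element, hence on everything. -/
theorem one_mem_one (hdec : IsInternal Rt)
    (hmul : ∀ g g' : G, ∀ x ∈ Rt g, ∀ y ∈ Rt g', x * y ∈ Rt (g * g')) :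
    (1 : A) ∈ Rt 1 := by
  have hunit (x : A) : x * hdec.proj 1 1 = x := by
    conv_lhs => rw [← hdec.sum_proj x, Finset.sum_mul]
    conv_rhs => rw [← hdec.sum_proj x]
    refine Finset.sum_congr rfl fun g _ ↦ ?_
    have hg := hdec.proj_mem g x
    rw [← hdec.proj_mul_of_mem_left hmul hg, mul_one, mul_one, hdec.proj_of_mem hg]
  have h1 : hdec.proj 1 1 = 1 := by simpa only [one_mul] using hunit 1
  exact h1 ▸ hdec.proj_mem 1 1

end GradedAlgebra

end DirectSum.IsInternal

theorem map_one_of_antimul {A : Type*} [MulOneClass A] {s : A → A}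
    (hanti : ∀ X Y, s (X * Y) = s Y * s X) (hinv : Function.Involutive s) : s 1 = 1 := by
  simpa only [one_mul, mul_one, hinv (s 1), hinv 1] using (hanti (s 1) 1).symm

namespace Matrix

variable {K m : Type*} [Field K] [Fintype m] [DecidableEq m]

theorem trace_map_of_antimul (hm : (Fintype.card m : K) ≠ 0)
    {s : Matrix m m K →ₗ[K] Matrix m m K}
    (hanti : ∀ X Y, s (X * Y) = s Y * s X) (hinv : Function.Involutive s) (X : Matrix m m K) :
    trace (s X) = trace X := by
  refine LinearMap.congr_fun (eq_traceLinearMap_of_map_mul_comm hm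
    (τ := traceLinearMap m K K ∘ₗ s) (fun X Y ↦ ?_) ?_) X
  · simp only [LinearMap.comp_apply, traceLinearMap_apply, hanti]
    exact trace_mul_comm _ _
  · simp [map_one_of_antimul hanti hinv]

theorem trace_eq_zero_of_map_eq_neg (h2 : (2 : K) ≠ 0) (hm : (Fintype.card m : K) ≠ 0)
    {s : Matrix m m K →ₗ[K] Matrix m m K} (hanti : ∀ X Y, s (X * Y) = s Y * s X)
    (hinv : Function.Involutive s) {X : Matrix m m K} (hX : s X = -X) : trace X = 0 := by
  have h := trace_map_of_antimul hm hanti hinv X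
  rw [hX, trace_neg, neg_eq_iff_add_eq_zero, ← two_mul] at h
  exact (mul_eq_zero.mp h).resolve_left h2

section Grading

variable {G : Type*} [Group G] [Fintype G] [DecidableEq G]
  {Rt : G → Submodule K (Matrix m m K)}

theorem trace_proj_one (hm : (Fintype.card m : K) ≠ 0) (hdec : DirectSum.IsInternal Rt)
    (hmul : ∀ g g' : G, ∀ x ∈ Rt g, ∀ y ∈ Rt g', x * y ∈ Rt (g * g'))
    (X : Matrix m m K) : trace (hdec.proj 1 X) = trace X := by
  refine LinearMap.congr_fun (eq_traceLinearMap_of_map_mul_comm hm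
    (τ := traceLinearMap m K K ∘ₗ hdec.proj 1) (fun X Y ↦ ?_) ?_) X
  · simp only [LinearMap.comp_apply, traceLinearMap_apply]
    rw [← hdec.sum_proj X, Finset.sum_mul, Finset.mul_sum, map_sum, map_sum, trace_sum, trace_sum]
    refine Finset.sum_congr rfl fun g _ ↦ ?_
    have hX := hdec.proj_mem g X
    have hl := hdec.proj_mul_of_mem_left hmul hX g⁻¹ Y
    have hr := hdec.proj_mul_of_mem_right hmul hX g⁻¹ Y
    rw [mul_inv_cancel] at hl
    rw [inv_mul_cancel] at hr
    rw [hl, hr, trace_mul_comm]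
  · simp [hdec.proj_of_mem (hdec.one_mem_one hmul)]

theorem trace_eq_zero_of_mem (hm : (Fintype.card m : K) ≠ 0) (hdec : DirectSum.IsInternal Rt)
    (hmul : ∀ g g' : G, ∀ x ∈ Rt g, ∀ y ∈ Rt g', x * y ∈ Rt (g * g'))
    {g : G} (hg : g ≠ 1) {X : Matrix m m K} (hX : X ∈ Rt g) : trace X = 0 := by
  rw [← trace_proj_one hm hdec hmul, hdec.proj_of_mem_ne hX hg, trace_zero]

end Grading

end Matrix

theorem iSupIndep_of_le_comap {ι R M : Type*} [Semiring R] [AddCommMonoid M] [Module R M]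
    {L P Q : ι → Submodule R M} {f₁ f₂ : M →ₗ[R] M} (hf : ∀ x, f₁ x + f₂ x = x)
    (hP : iSupIndep P) (hQ : iSupIndep Q) (hLP : ∀ i, L i ≤ (P i).comap f₁)
    (hLQ : ∀ i, L i ≤ (Q i).comap f₂) : iSupIndep L := by
  intro i
  rw [Submodule.disjoint_def]
  intro x hx hx'
  have hvanish {T : ι → Submodule R M} (f : M →ₗ[R] M) (hT : iSupIndep T)
      (hLT : ∀ i, L i ≤ (T i).comap f) : f x = 0 := by
    refine Submodule.disjoint_def.mp (hT i) _ (hLT i hx) ?_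
    refine Submodule.mem_comap.mp
      (iSup₂_le (fun j hj ↦ (hLT j).trans (Submodule.comap_mono ?_)) hx')
    exact le_iSup₂ (f := fun j (_ : j ≠ i) ↦ T j) j hj
  rw [← hf x, hvanish f₁ hP hLP, hvanish f₂ hQ hLQ, add_zero]

theorem mul_sub_mul_mem {R A G : Type*} [Ring R] [Ring A] [Module R A] [CommGroup G]
    {Rt : G → Submodule R A}
    (hmul : ∀ g g' : G, ∀ x ∈ Rt g, ∀ y ∈ Rt g', x * y ∈ Rt (g * g'))
    {g g' : G} {x y : A} (hx : x ∈ Rt g) (hy : y ∈ Rt g') : x * y - y * x ∈ Rt (g * g') :=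
  sub_mem (hmul _ _ _ hx _ hy) (mul_comm g g' ▸ hmul _ _ _ hy _ hx)

section TypeII

variable {K m G : Type*} [Field K] [Fintype m] [DecidableEq m] [CommGroup G] [DecidableEq G]

/-- The paper's `L_g`. -/
def typeIIComponent (s : Matrix m m K →ₗ[K] Matrix m m K)
    (Rt : G → Submodule K (Matrix m m K)) (h g : G) : Submodule K (Matrix m m K) :=
  (Rt g ⊓ LinearMap.ker (s + LinearMap.id)) ⊔
    (Rt (g * h) ⊓ LinearMap.ker (s - LinearMap.id) ⊓
      (if g = h then LinearMap.ker (Matrix.traceLinearMap m K K) else ⊤))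

variable {s : Matrix m m K →ₗ[K] Matrix m m K} {Rt : G → Submodule K (Matrix m m K)} {h : G}

theorem skew_mem_typeIIComponent {g : G} {x : Matrix m m K} (hx : x ∈ Rt g) (hsx : s x = -x) :
    x ∈ typeIIComponent s Rt h g :=
  Submodule.mem_sup_left (Submodule.mem_inf.mpr ⟨hx, (LinearMap.mem_ker_add_id_iff s).mpr hsx⟩)

theorem sym_mem_typeIIComponent {g : G} {x : Matrix m m K} (hx : x ∈ Rt (g * h)) (hsx : s x = x)
    (htr : x.trace = 0) : x ∈ typeIIComponent s Rt h g := by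
  refine Submodule.mem_sup_right (Submodule.mem_inf.mpr
    ⟨Submodule.mem_inf.mpr ⟨hx, (LinearMap.mem_ker_sub_id_iff s).mpr hsx⟩, ?_⟩)
  split_ifs
  exacts [htr, trivial]

theorem typeIIComponent_le_comap_skewPart (h2 : (2 : K) ≠ 0) (g : G) :
    typeIIComponent s Rt h g ≤ (Rt g).comap s.skewPart := by
  refine sup_le (fun x ⟨hxR, hxK⟩ ↦ ?_) (fun x ⟨⟨_, hxK⟩, _⟩ ↦ ?_) <;>
    rw [Submodule.mem_comap]
  · rwa [LinearMap.skewPart_eq_self h2 ((LinearMap.mem_ker_add_id_iff s).mp hxK)]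
  · rw [LinearMap.skewPart_eq_zero ((LinearMap.mem_ker_sub_id_iff s).mp hxK)]
    exact zero_mem _

theorem typeIIComponent_le_comap_symPart (h2 : (2 : K) ≠ 0) (g : G) :
    typeIIComponent s Rt h g ≤ (Rt (g * h)).comap s.symPart := by
  refine sup_le (fun x ⟨_, hxK⟩ ↦ ?_) (fun x ⟨⟨hxR, hxK⟩, _⟩ ↦ ?_) <;>
    rw [Submodule.mem_comap]
  · rw [LinearMap.symPart_eq_zero ((LinearMap.mem_ker_add_id_iff s).mp hxK)]
    exact zero_mem _
  · rwa [LinearMap.symPart_eq_self h2 ((LinearMap.mem_ker_sub_id_iff s).mp hxK)]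

theorem iSupIndep_typeIIComponent (h2 : (2 : K) ≠ 0)
    (hdec : DirectSum.IsInternal Rt) : iSupIndep (typeIIComponent s Rt h) :=
  iSupIndep_of_le_comap (LinearMap.symPart_add_skewPart h2)
    (hdec.submodule_iSupIndep.comp (mul_left_injective h)) hdec.submodule_iSupIndep
    (typeIIComponent_le_comap_symPart h2) (typeIIComponent_le_comap_skewPart h2)

theorem typeIIComponent_le_ker_trace [Fintype G] (h2 : (2 : K) ≠ 0)
    (hm : (Fintype.card m : K) ≠ 0) (hanti : ∀ X Y, s (X * Y) = s Y * s X)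
    (hinv : Function.Involutive s) (hdec : DirectSum.IsInternal Rt)
    (hmul : ∀ g g' : G, ∀ x ∈ Rt g, ∀ y ∈ Rt g', x * y ∈ Rt (g * g')) (hh2 : h * h = 1)
    (g : G) : typeIIComponent s Rt h g ≤ LinearMap.ker (Matrix.traceLinearMap m K K) := by
  refine sup_le (fun x ⟨_, hxK⟩ ↦ ?_) (fun x ⟨⟨hxR, _⟩, hx⟩ ↦ ?_)
  · exact Matrix.trace_eq_zero_of_map_eq_neg h2 hm hanti hinv
      ((LinearMap.mem_ker_add_id_iff s).mp hxK)
  · split_ifs at hx with hgh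
    · exact hx
    · refine Matrix.trace_eq_zero_of_mem hm hdec hmul (fun hgh1 ↦ hgh ?_) hxR
      exact (eq_inv_of_mul_eq_one_left hgh1).trans (inv_eq_of_mul_eq_one_left hh2)

/-- The symmetric part of the degree-`e` component lands in `L_h`: it is traceless because all
other symmetric and skew homogeneous pieces of a traceless matrix are. -/
theorem ker_trace_le_iSup_typeIIComponent [Fintype G] (h2 : (2 : K) ≠ 0)
    (hm : (Fintype.card m : K) ≠ 0) (hanti : ∀ X Y, s (X * Y) = s Y * s X)
    (hinv : Function.Involutive s) (hdec : DirectSum.IsInternal Rt)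
    (hmul : ∀ g g' : G, ∀ x ∈ Rt g, ∀ y ∈ Rt g', x * y ∈ Rt (g * g'))
    (hstar : ∀ g : G, ∀ x ∈ Rt g, s x ∈ Rt g) (hh2 : h * h = 1) :
    LinearMap.ker (Matrix.traceLinearMap m K K) ≤ ⨆ g, typeIIComponent s Rt h g := by
  intro x hx
  rw [← hdec.sum_proj x]
  refine Submodule.sum_mem _ fun g _ ↦ ?_
  have hg := hdec.proj_mem g x
  rw [← s.symPart_add_skewPart h2 (hdec.proj g x)]
  refine add_mem (Submodule.mem_iSup_of_mem (g * h) (sym_mem_typeIIComponent ?_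
    (s.map_symPart hinv _) ?_)) (Submodule.mem_iSup_of_mem g (skew_mem_typeIIComponent
      (LinearMap.skewPart_mem (hstar g) hg) (s.map_skewPart hinv _)))
  · rw [mul_assoc, hh2, mul_one]
    exact LinearMap.symPart_mem (hstar g) hg
  · obtain rfl | hg1 := eq_or_ne g 1
    · have hskew := Matrix.trace_eq_zero_of_map_eq_neg h2 hm hanti hinv
        (s.map_skewPart hinv (hdec.proj 1 x))
      have hsplit := congrArg Matrix.trace (s.symPart_add_skewPart h2 (hdec.proj 1 x))
      rw [Matrix.trace_add, hskew, add_zero, Matrix.trace_proj_one hm hdec hmul] at hsplit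
      exact hsplit.trans hx
    · exact Matrix.trace_eq_zero_of_mem hm hdec hmul hg1 (LinearMap.symPart_mem (hstar g) hg)

theorem mul_sub_mul_mem_typeIIComponent (hanti : ∀ X Y, s (X * Y) = s Y * s X)
    (hmul : ∀ g g' : G, ∀ x ∈ Rt g, ∀ y ∈ Rt g', x * y ∈ Rt (g * g')) (hh2 : h * h = 1)
    {g g' : G} {x y : Matrix m m K} (hx : x ∈ typeIIComponent s Rt h g)
    (hy : y ∈ typeIIComponent s Rt h g') : x * y - y * x ∈ typeIIComponent s Rt h (g * g') := by
  obtain ⟨a, ⟨haR, haK⟩, b, ⟨⟨hbR, hbK⟩, -⟩, rfl⟩ := Submodule.mem_sup.mp hx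
  obtain ⟨c, ⟨hcR, hcK⟩, d, ⟨⟨hdR, hdK⟩, -⟩, rfl⟩ := Submodule.mem_sup.mp hy
  simp only [SetLike.mem_coe, LinearMap.mem_ker_add_id_iff, LinearMap.mem_ker_sub_id_iff]
    at haK hbK hcK hdK
  have hs (u v : Matrix m m K) : s (u * v - v * u) = s v * s u - s u * s v := by
    rw [map_sub, hanti, hanti]
  have htr (u v : Matrix m m K) : Matrix.trace (u * v - v * u) = 0 := by
    rw [Matrix.trace_sub, Matrix.trace_mul_comm, sub_self]
  have hexpand : (a + b) * (c + d) - (c + d) * (a + b) =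
      (a * c - c * a) + (a * d - d * a) + ((b * c - c * b) + (b * d - d * b)) := by
    noncomm_ring
  rw [hexpand]
  refine add_mem (add_mem ?_ ?_) (add_mem ?_ ?_)
  · refine skew_mem_typeIIComponent (mul_sub_mul_mem hmul haR hcR) ?_
    rw [hs, haK, hcK, neg_mul_neg, neg_mul_neg, neg_sub]
  · refine sym_mem_typeIIComponent ?_ ?_ (htr a d)
    · simpa only [mul_assoc] using mul_sub_mul_mem hmul haR hdR
    · rw [hs, haK, hdK, mul_neg, neg_mul, sub_neg_eq_add, neg_add_eq_sub]
  · refine sym_mem_typeIIComponent ?_ ?_ (htr b c)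
    · simpa only [mul_right_comm] using mul_sub_mul_mem hmul hbR hcR
    · rw [hs, hbK, hcK, mul_neg, neg_mul, sub_neg_eq_add, neg_add_eq_sub]
  · refine skew_mem_typeIIComponent ?_ ?_
    · convert mul_sub_mul_mem hmul hbR hdR using 2
      rw [mul_mul_mul_comm, hh2, mul_one]
    · rw [hs, hbK, hdK, neg_sub]

end TypeII

theorem typeII_grading_of_sl_general
    {F : Type*} [Field F] (h2 : (2 : F) ≠ 0) {n : ℕ} (hn : (n : F) ≠ 0)
    {G : Type*} [CommGroup G] [Fintype G] [DecidableEq G]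
    (s : Matrix (Fin n) (Fin n) F →ₗ[F] Matrix (Fin n) (Fin n) F)
    (hanti : ∀ X Y, s (X * Y) = s Y * s X) (hinv : ∀ X, s (s X) = X)
    (h : G) (hh2 : h * h = 1)
    (Rt : G → Submodule F (Matrix (Fin n) (Fin n) F))
    (hdec : DirectSum.IsInternal Rt)
    (hmul : ∀ g g' : G, ∀ x ∈ Rt g, ∀ y ∈ Rt g', x * y ∈ Rt (g * g'))
    (hstar : ∀ g : G, ∀ x ∈ Rt g, s x ∈ Rt g) :
    let sl : Submodule F (Matrix (Fin n) (Fin n) F) :=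
      LinearMap.ker (Matrix.traceLinearMap (Fin n) F F)
    let Lg : G → Submodule F (Matrix (Fin n) (Fin n) F) := fun g =>
      (Rt g ⊓ LinearMap.ker (s + LinearMap.id)) ⊔
        (Rt (g * h) ⊓ LinearMap.ker (s - LinearMap.id) ⊓ (if g = h then sl else ⊤))
    (sl = ⨆ g : G, Lg g) ∧
    (∀ g : G, Disjoint (Lg g) (⨆ g' ∈ {x : G | x ≠ g}, Lg g')) ∧
    (∀ g g' : G, ∀ x ∈ Lg g, ∀ y ∈ Lg g', x * y - y * x ∈ Lg (g * g')) := by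
  have hm : (Fintype.card (Fin n) : F) ≠ 0 := by rwa [Fintype.card_fin]
  refine ⟨le_antisymm ?_ ?_, iSupIndep_typeIIComponent h2 hdec, fun g g' x hx y hy ↦ ?_⟩
  · exact ker_trace_le_iSup_typeIIComponent h2 hm hanti hinv hdec hmul hstar hh2
  · exact iSup_le (typeIIComponent_le_ker_trace h2 hm hanti hinv hdec hmul hh2)
  · exact mul_sub_mul_mem_typeIIComponent hanti hmul hh2 hx hy

/-- Type II gradings of `sl(n)`: Let `R = M_n(F)`, `char F ≠ 2`,
`char F ∤ n`, with a linear involution `s` and an involution `G`-grading `R = ⊕ R̃_g`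
(`G` finite abelian, `h ∈ G` of order 2). Setting
`L_g = R̃_g⁽⁻⁾ ⊕ R̃_{gh}⁽⁺⁾` for `g ≠ h` and `L_h = R̃_h⁽⁻⁾ ⊕ (R̃_e⁽⁺⁾ ∩ sl(n))`
yields a `G`-grading of the Lie algebra `sl(n)`. -/
theorem typeII_grading_of_sl
    {F : Type*} [Field F] (h2 : (2 : F) ≠ 0) {n : ℕ} (hn : (n : F) ≠ 0)
    {G : Type*} [CommGroup G] [Fintype G] [DecidableEq G]
    (s : Matrix (Fin n) (Fin n) F →ₗ[F] Matrix (Fin n) (Fin n) F)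
    (hanti : ∀ X Y, s (X * Y) = s Y * s X) (hinv : ∀ X, s (s X) = X)
    (h : G) (hh1 : h ≠ 1) (hh2 : h * h = 1)
    (Rt : G → Submodule F (Matrix (Fin n) (Fin n) F))
    (hdec : DirectSum.IsInternal Rt)
    (hmul : ∀ g g' : G, ∀ x ∈ Rt g, ∀ y ∈ Rt g', x * y ∈ Rt (g * g'))
    (hstar : ∀ g : G, ∀ x ∈ Rt g, s x ∈ Rt g) :
    let sl : Submodule F (Matrix (Fin n) (Fin n) F) :=
      LinearMap.ker (Matrix.traceLinearMap (Fin n) F F)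
    let Lg : G → Submodule F (Matrix (Fin n) (Fin n) F) := fun g =>
      (Rt g ⊓ LinearMap.ker (s + LinearMap.id)) ⊔
        (Rt (g * h) ⊓ LinearMap.ker (s - LinearMap.id) ⊓ (if g = h then sl else ⊤))
    (sl = ⨆ g : G, Lg g) ∧
    (∀ g : G, Disjoint (Lg g) (⨆ g' ∈ {x : G | x ≠ g}, Lg g')) ∧
    (∀ g g' : G, ∀ x ∈ Lg g, ∀ y ∈ Lg g', x * y - y * x ∈ Lg (g * g')) :=
  typeII_grading_of_sl_general h2 hn s hanti hinv h hh2 Rt hdec hmul hstar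
end
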